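/- Let μ be a compactly supported probability measure on ℝ² that charges no line and whose support has non-empty interior. Define d_{χ,μ}(x,x′) = ∫_{(ℝ²)²} |χ(x,y,z) − χ(x′,y,z)| dμ(y)dμ(z) for x,x′ ∈ supp μ. Then d_{χ,μ} is a distance on supp μ, and the topology it induces on supp μ coincides with the topology induced by the Euclidean norm: a sequence (x_n) in supp μ converges to x ∈ supp μ for d_{χ,μ} if and only if it converges to x in Euclidean norm. -/

import Mathlib

open MeasureTheory Filter Topology
open scoped ENNReal NNReal

noncomputable section

/-- Points of the plane. -/
abbrev Pt : Type := ℝ × ℝ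

/-- The orientation of a triple of points: the sign of `det (q - p, r - p)`. -/
noncomputable def chi (p q r : Pt) : ℝ :=
  Real.sign ((q.1 - p.1) * (r.2 - p.2) - (q.2 - p.2) * (r.1 - p.1))

/-- Affine lines of the plane. -/
def IsAffineLine (L : Set Pt) : Prop :=
  ∃ p v : Pt, v ≠ 0 ∧ L = {x | ∃ t : ℝ, x = p + t • v}

/-- A measure charges no line. -/
def ChargesNoLine (μ : Measure Pt) : Prop :=
  ∀ L : Set Pt, IsAffineLine L → μ L = 0

/-- The (topological) support of a measure on the plane. -/
def msupport (μ : Measure Pt) : Set Pt :=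
  {x | ∀ U : Set Pt, IsOpen U → x ∈ U → 0 < μ U}

/-- The neighborhood pseudo-distance `d_{χ,μ}` associated to the chirotope kernel of a
measure `μ`. -/
noncomputable def dchi (μ : Measure Pt) (x x' : Pt) : ℝ :=
  ∫ p : Pt × Pt, |chi x p.1 p.2 - chi x' p.1 p.2| ∂(μ.prod μ)

/-!
The kernel `|χ(x,y,z) - χ(x',y,z)|` equals `2` exactly when the line `yz` strictly separates
`x` from `x'`. Since `μ` charges no line, for `μ ⊗ μ`-almost every `(y,z)` the point `x` is off
the line `yz`, so `χ(·,y,z)` is locally constant at `x`, and dominated convergence makes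
`d_{χ,μ}` continuous. If `x ≠ x'`, the interior of the support is not contained in the line
`xx'`, so it contains a point `y` off that line and a point `z` close to `y` on the segment from
`y` to the midpoint of `xx'`; the line `yz` separates `x` from `x'`, and so do all pairs in
an open neighbourhood of `(y,z)`, which has positive `μ ⊗ μ`-measure. Hence `d_{χ,μ}` is a
distance, and by compactness of the support a sequence whose distance to `x` tends to `0` can
only accumulate at `x`.
-/

def orientDet (p q r : Pt) : ℝ :=
  (q.1 - p.1) * (r.2 - p.2) - (q.2 - p.2) * (r.1 - p.1)

lemma chi_def (p q r : Pt) : chi p q r = Real.sign (orientDet p q r) := rfl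

namespace Real

lemma abs_sign_le_one (r : ℝ) : |Real.sign r| ≤ 1 := by
  rcases Real.sign_apply_eq r with h | h | h <;> simp [h]

lemma measurable_sign : Measurable Real.sign :=
  Measurable.ite measurableSet_Iio measurable_const
    (Measurable.ite measurableSet_Ioi measurable_const measurable_const)

lemma continuousAt_sign_of_ne_zero {t : ℝ} (ht : t ≠ 0) : ContinuousAt Real.sign t := by
  rcases ht.lt_or_gt with h | h
  · refine (continuousAt_const (y := Real.sign t)).congr
      ((eventually_lt_nhds h).mono fun s hs => ?_)
    rw [Real.sign_of_neg h, Real.sign_of_neg hs]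
  · refine (continuousAt_const (y := Real.sign t)).congr
      ((eventually_gt_nhds h).mono fun s hs => ?_)
    rw [Real.sign_of_pos h, Real.sign_of_pos hs]

end Real

lemma continuous_orientDet_left (q r : Pt) : Continuous fun p => orientDet p q r := by
  unfold orientDet; fun_prop

lemma continuous_orientDet_right (p : Pt) :
    Continuous fun qr : Pt × Pt => orientDet p qr.1 qr.2 := by
  unfold orientDet; fun_prop

lemma measurable_chi_right (p : Pt) : Measurable fun qr : Pt × Pt => chi p qr.1 qr.2 :=
  Real.measurable_sign.comp (continuous_orientDet_right p).measurable

lemma abs_chi_sub_chi_le_two (x x' y z : Pt) : |chi x y z - chi x' y z| ≤ 2 := by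
  have := abs_sub (chi x y z) (chi x' y z)
  rw [chi_def, chi_def] at this ⊢
  linarith [Real.abs_sign_le_one (orientDet x y z), Real.abs_sign_le_one (orientDet x' y z)]

lemma continuousAt_chi_left {x y z : Pt} (h : orientDet x y z ≠ 0) :
    ContinuousAt (fun x' => chi x' y z) x :=
  (Real.continuousAt_sign_of_ne_zero h).comp (f := fun p => orientDet p y z)
    (continuous_orientDet_left y z).continuousAt

lemma chi_ne_chi_of_orientDet_mul_neg {x x' y z : Pt}
    (h : orientDet x y z * orientDet x' y z < 0) : chi x y z ≠ chi x' y z := by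
  rcases mul_neg_iff.1 h with ⟨h₁, h₂⟩ | ⟨h₁, h₂⟩ <;>
    norm_num [chi_def, Real.sign_of_pos, Real.sign_of_neg, h₁, h₂]

lemma setOf_orientDet_eq_zero_subset {x y : Pt} (hxy : x ≠ y) :
    {z | orientDet x y z = 0} ⊆ {z | ∃ t : ℝ, z = x + t • (y - x)} := by
  intro z (hz : orientDet x y z = 0)
  unfold orientDet at hz
  have hv : (y.1 - x.1) ^ 2 + (y.2 - x.2) ^ 2 ≠ 0 := by
    contrapose! hxy
    ext <;> nlinarith [sq_nonneg (y.1 - x.1), sq_nonneg (y.2 - x.2)]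
  refine ⟨((z.1 - x.1) * (y.1 - x.1) + (z.2 - x.2) * (y.2 - x.2)) /
    ((y.1 - x.1) ^ 2 + (y.2 - x.2) ^ 2), Prod.ext ?_ ?_⟩ <;>
    simp only [Prod.fst_add, Prod.snd_add, Prod.smul_fst, Prod.smul_snd, Prod.fst_sub,
      Prod.snd_sub, smul_eq_mul] <;> field_simp
  · linear_combination -(y.2 - x.2) * hz
  · linear_combination (y.1 - x.1) * hz

/-- The line through `y` and `z` passes through the midpoint of `xx'`, hence separates `x`
from `x'` as soon as it does not contain them. -/
lemma orientDet_mul_orientDet_lineMap_midpoint_neg {x x' y : Pt} {t : ℝ}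
    (hy : orientDet x x' y ≠ 0) (ht : t ≠ 0) :
    orientDet x y (AffineMap.lineMap y (midpoint ℝ x x') t) *
      orientDet x' y (AffineMap.lineMap y (midpoint ℝ x x') t) < 0 := by
  have key : orientDet x y (AffineMap.lineMap y (midpoint ℝ x x') t) *
      orientDet x' y (AffineMap.lineMap y (midpoint ℝ x x') t) =
        -(t * orientDet x x' y / 2) ^ 2 := by
    simp only [orientDet, AffineMap.lineMap_apply_module, midpoint_eq_smul_add, invOf_eq_inv,
      Prod.fst_add, Prod.snd_add, Prod.smul_fst, Prod.smul_snd, smul_eq_mul]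
    ring
  rw [key, neg_lt_zero]
  positivity

namespace ChargesNoLine

variable {μ : Measure Pt}

lemma measure_setOf_orientDet_eq_zero (hμ : ChargesNoLine μ) {x y : Pt} (hxy : x ≠ y) :
    μ {z | orientDet x y z = 0} = 0 :=
  measure_mono_null (setOf_orientDet_eq_zero_subset hxy)
    (hμ _ ⟨x, y - x, sub_ne_zero.2 hxy.symm, rfl⟩)

lemma measure_singleton (hμ : ChargesNoLine μ) (x : Pt) : μ {x} = 0 := by
  obtain ⟨y, hy⟩ := exists_ne x
  refine measure_mono_null ?_ (hμ.measure_setOf_orientDet_eq_zero hy.symm)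
  rintro _ rfl
  simp [orientDet]

lemma prod_measure_setOf_orientDet_eq_zero (hμ : ChargesNoLine μ) (x : Pt) :
    μ.prod μ {p : Pt × Pt | orientDet x p.1 p.2 = 0} = 0 := by
  refine Measure.measure_prod_null_of_ae_null
    (measurableSet_eq_fun (continuous_orientDet_right x).measurable measurable_const) ?_
  filter_upwards [measure_eq_zero_iff_ae_notMem.1 (hμ.measure_singleton x)] with y hy
  exact hμ.measure_setOf_orientDet_eq_zero (Ne.symm hy)

end ChargesNoLine

lemma measure_prod_pos_of_mem_msupport {μ ν : Measure Pt} [SFinite ν] {S : Set (Pt × Pt)}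
    (hS : IsOpen S) {y z : Pt} (hyz : (y, z) ∈ S) (hy : y ∈ msupport μ)
    (hz : z ∈ msupport ν) : 0 < μ.prod ν S := by
  obtain ⟨U, V, hU, hV, hyU, hzV, hUV⟩ := isOpen_prod_iff.1 hS y z hyz
  calc 0 < μ.prod ν (U ×ˢ V) := by
        rw [Measure.prod_prod]
        exact ENNReal.mul_pos (hy U hU hyU).ne' (hz V hV hzV).ne'
    _ ≤ μ.prod ν S := measure_mono hUV

lemma exists_mem_msupport_orientDet_mul_neg {μ : Measure Pt} (hμ : ChargesNoLine μ)
    (hi : (interior (msupport μ)).Nonempty) {x x' : Pt} (hne : x ≠ x') :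
    ∃ y ∈ msupport μ, ∃ z ∈ msupport μ, orientDet x y z * orientDet x' y z < 0 := by
  obtain ⟨y, hyU, hy⟩ : ∃ y ∈ interior (msupport μ), orientDet x x' y ≠ 0 := by
    by_contra! h
    obtain ⟨c, hc⟩ := hi
    exact (interior_subset hc _ isOpen_interior hc).ne'
      (measure_mono_null h (hμ.measure_setOf_orientDet_eq_zero hne))
  have hnear : ∀ᶠ t in 𝓝 (0 : ℝ),
      AffineMap.lineMap y (midpoint ℝ x x') t ∈ interior (msupport μ) :=
    (AffineMap.lineMap_continuous.tendsto' 0 y (AffineMap.lineMap_apply_zero _ _)).eventually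
      (isOpen_interior.mem_nhds hyU)
  obtain ⟨t, htU, ht⟩ :=
    ((hnear.filter_mono nhdsWithin_le_nhds).and (self_mem_nhdsWithin (s := {0}ᶜ))).exists
  exact ⟨y, interior_subset hyU, _, interior_subset htU,
    orientDet_mul_orientDet_lineMap_midpoint_neg hy ht⟩

section dchi

variable {μ : Measure Pt}

lemma integrable_abs_chi_sub_chi [IsFiniteMeasure μ] (x x' : Pt) :
    Integrable (fun p : Pt × Pt => |chi x p.1 p.2 - chi x' p.1 p.2|) (μ.prod μ) :=
  (integrable_const (2 : ℝ)).mono'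
    ((measurable_chi_right x).sub (measurable_chi_right x')).abs.aestronglyMeasurable
    (ae_of_all _ fun p => by simpa using abs_chi_sub_chi_le_two x x' p.1 p.2)

lemma dchi_self (x : Pt) : dchi μ x x = 0 := by
  simp [dchi]

lemma dchi_nonneg (x x' : Pt) : 0 ≤ dchi μ x x' :=
  integral_nonneg fun _ => abs_nonneg _

lemma dchi_comm (x x' : Pt) : dchi μ x x' = dchi μ x' x := by
  simp only [dchi, abs_sub_comm]

lemma dchi_triangle [IsFiniteMeasure μ] (x y z : Pt) :
    dchi μ x z ≤ dchi μ x y + dchi μ y z := by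
  rw [dchi, dchi, dchi, ← integral_add (integrable_abs_chi_sub_chi x y)
    (integrable_abs_chi_sub_chi y z)]
  exact integral_mono (integrable_abs_chi_sub_chi x z)
    ((integrable_abs_chi_sub_chi x y).add (integrable_abs_chi_sub_chi y z))
    fun _ => abs_sub_le _ _ _

lemma continuous_dchi_left [IsFiniteMeasure μ] (hμ : ChargesNoLine μ) (x : Pt) :
    Continuous fun x' => dchi μ x' x := by
  refine continuous_iff_continuousAt.2 fun x₀ => continuousAt_of_dominated
    (bound := fun _ => 2) (Eventually.of_forall fun x' => ?_)
    (Eventually.of_forall fun x' => ae_of_all _ fun p => ?_) (integrable_const _) ?_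
  · exact (integrable_abs_chi_sub_chi x' x).aestronglyMeasurable
  · simpa using abs_chi_sub_chi_le_two x' x p.1 p.2
  · filter_upwards [measure_eq_zero_iff_ae_notMem.1
      (hμ.prod_measure_setOf_orientDet_eq_zero x₀)] with p hp
    exact ((continuousAt_chi_left hp).sub continuousAt_const).abs

lemma dchi_pos [IsFiniteMeasure μ] (hμ : ChargesNoLine μ)
    (hi : (interior (msupport μ)).Nonempty) {x x' : Pt} (hne : x ≠ x') : 0 < dchi μ x x' := by
  obtain ⟨y, hy, z, hz, hyz⟩ := exists_mem_msupport_orientDet_mul_neg hμ hi hne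
  have hS : IsOpen {p : Pt × Pt | orientDet x p.1 p.2 * orientDet x' p.1 p.2 < 0} :=
    isOpen_lt ((continuous_orientDet_right x).mul (continuous_orientDet_right x'))
      continuous_const
  rw [dchi, integral_pos_iff_support_of_nonneg (fun _ => abs_nonneg _)
    (integrable_abs_chi_sub_chi x x')]
  exact (measure_prod_pos_of_mem_msupport hS hyz hy hz).trans_le (measure_mono fun p hp =>
    abs_ne_zero.2 (sub_ne_zero.2 (chi_ne_chi_of_orientDet_mul_neg hp)))

lemma tendsto_of_tendsto_dchi_zero [IsFiniteMeasure μ] (hcomp : IsCompact (msupport μ))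
    (hμ : ChargesNoLine μ) (hi : (interior (msupport μ)).Nonempty) {ι : Type*} {l : Filter ι}
    {xs : ι → Pt} {x : Pt} (hxs : ∀ᶠ i in l, xs i ∈ msupport μ)
    (h : Tendsto (fun i => dchi μ (xs i) x) l (𝓝 0)) : Tendsto xs l (𝓝 x) := by
  refine hcomp.tendsto_nhds_of_unique_mapClusterPt hxs fun y _ hy => ?_
  by_contra hne
  have hdy := hy.continuousAt_comp (continuous_dchi_left hμ x).continuousAt
  exact (dchi_pos hμ hi hne).ne' (eq_of_nhds_neBot (ClusterPt.mono hdy h).neBot)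

end dchi

theorem stmt_13 (μ : Measure Pt) [IsProbabilityMeasure μ]
    (hcomp : IsCompact (msupport μ)) (hline : ChargesNoLine μ)
    (hi : (interior (msupport μ)).Nonempty) :
    ((∀ x x' : Pt, 0 ≤ dchi μ x x') ∧
     (∀ x x' : Pt, dchi μ x x' = dchi μ x' x) ∧
     (∀ x y z : Pt, dchi μ x z ≤ dchi μ x y + dchi μ y z) ∧
     (∀ x ∈ msupport μ, ∀ x' ∈ msupport μ, dchi μ x x' = 0 → x = x')) ∧
    ∀ (xs : ℕ → Pt) (x : Pt), (∀ n, xs n ∈ msupport μ) → x ∈ msupport μ →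
      (Tendsto (fun n => dchi μ (xs n) x) atTop (nhds 0) ↔
        Tendsto xs atTop (nhds x)) := by
  refine ⟨⟨dchi_nonneg, dchi_comm, dchi_triangle, fun x _ x' _ h => ?_⟩,
    fun xs x hxs _ => ?_⟩
  · by_contra hne
    exact (dchi_pos hline hi hne).ne' h
  refine ⟨tendsto_of_tendsto_dchi_zero hcomp hline hi (.of_forall hxs), fun h => ?_⟩
  have := ((continuous_dchi_left hline x).tendsto x).comp h
  rwa [dchi_self] at this

end
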